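/- Compatibility of the exponential weights for the source-term method: let ℓ ≥ 14, T > 0, C_K > 0, K(τ) = C_K e^{C_K/τ^{2ℓ}}, and q ∈ (1, 2^{1/(4ℓ)}). Let C₁ > 0 be such that C₀ := C₁/q^{4ℓ} − C_K/(q−1)^{2ℓ} > C₁/2 and choose C⋆ with C₁/2 < C⋆ < C₀ < C₁. Define ρ₀(t) = C_K e^{−C₀/(T−t)^{2ℓ}}, ρ₁(t) = e^{−C₁/(T−t)^{2ℓ}}, ρ(t) = e^{−C⋆/(T−t)^{2ℓ}}. Then: (i) ρ₀, ρ₁, ρ are continuous, non increasing, positive on [0,T) and vanish at T; (ii) ρ₀(t) = ρ₁(q²(t−T)+T) · K((q−1)(T−t)) for t ∈ [T(1−1/q²), T]; (iii) there exists C > 0 with ρ₀ ≤ Cρ, ρ₁ ≤ Cρ and |ρ'|ρ₀ ≤ Cρ² on [0,T]; (iv) ρ² ≤ ρ₁ on [0,T]. -/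

import Mathlib

open Real Set

noncomputable section

/-- Observability cost `K(τ) = C_K e^{C_K/τ^{2ℓ}}`. -/
def Kcost (CK : ℝ) (l : ℕ) (τ : ℝ) : ℝ := CK * Real.exp (CK / τ ^ (2 * l))

/-- Exponential weight `t ↦ e^{−c/(T−t)^{2ℓ}}` on `[0,T)`, extended by `0` at `t = T`. -/
def expWeight (c : ℝ) (l : ℕ) (T : ℝ) (t : ℝ) : ℝ :=
  if t < T then Real.exp (-c / (T - t) ^ (2 * l)) else 0

open Filter Topology in
private lemma exp_ge_sq_div_four' (x : ℝ) (hx : 0 ≤ x) : x ^ 2 / 4 ≤ Real.exp x := by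
  have h := Real.add_one_le_exp (x / 2)
  have h2 : Real.exp (x / 2) ^ 2 = Real.exp x := by
    rw [sq, ← Real.exp_add]; ring_nf
  nlinarith [Real.exp_pos (x / 2)]

open Filter Topology in
private lemma tendsto_expW' (c : ℝ) (hc : 0 < c) (l : ℕ) (hl : 1 ≤ l) (T : ℝ) :
    Tendsto (fun t => Real.exp (-c / (T - t) ^ (2 * l))) (𝓝[<] T) (𝓝 0) := by
  have h1 : Tendsto (fun t : ℝ => (T - t) ^ (2 * l)) (𝓝[<] T) (𝓝[>] 0) := by
    rw [tendsto_nhdsWithin_iff]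
    constructor
    · have : Tendsto (fun t : ℝ => (T - t) ^ (2 * l)) (𝓝 T) (𝓝 ((T - T) ^ (2 * l))) :=
        ((continuous_const.sub continuous_id).pow _).tendsto T
      have h0 : (T - T) ^ (2 * l) = 0 := by
        rw [sub_self]; exact zero_pow (by omega)
      rw [h0] at this
      exact this.mono_left nhdsWithin_le_nhds
    · filter_upwards [self_mem_nhdsWithin] with x hx
      exact mem_Ioi.mpr (pow_pos (sub_pos.mpr hx) _)
  have h2 : Tendsto (fun t : ℝ => -c / (T - t) ^ (2 * l)) (𝓝[<] T) atBot := by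
    have h3 : Tendsto (fun s : ℝ => -c / s) (𝓝[>] 0) atBot := by
      have h4 : Tendsto (fun s : ℝ => c * s⁻¹) (𝓝[>] 0) atTop :=
        (tendsto_inv_nhdsGT_zero (𝕜 := ℝ)).const_mul_atTop hc
      rw [show (fun s : ℝ => -c / s) = (fun s : ℝ => -(c * s⁻¹)) from funext fun s => by ring]
      exact tendsto_neg_atBot_iff.mpr h4
    exact h3.comp h1
  exact Real.tendsto_exp_atBot.comp h2

open Filter Topology in
private lemma partI' (c : ℝ) (hc : 0 < c) (l : ℕ) (hl : 1 ≤ l) (T : ℝ) :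
    ContinuousOn (expWeight c l T) (Set.Icc 0 T) ∧
    AntitoneOn (expWeight c l T) (Set.Icc 0 T) ∧
    (∀ t ∈ Set.Ico 0 T, 0 < expWeight c l T t) ∧
    expWeight c l T T = 0 := by
  refine ⟨?_, ?_, ?_, by simp [expWeight]⟩
  · intro t ht
    rcases lt_or_eq_of_le ht.2 with h | h
    · have hne : (T - t) ^ (2 * l) ≠ 0 := pow_ne_zero _ (ne_of_gt (sub_pos.mpr h))
      have hcont : ContinuousAt (fun x => Real.exp (-c / (T - x) ^ (2 * l))) t := by
        apply Real.continuous_exp.continuousAt.comp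
        exact ContinuousAt.div continuousAt_const
          (((continuous_const.sub continuous_id).pow _).continuousAt) hne
      have : ContinuousAt (expWeight c l T) t := by
        apply hcont.congr
        filter_upwards [Iio_mem_nhds h] with x hx
        simp [expWeight, mem_Iio.mp hx]
      exact this.continuousWithinAt
    · rw [h]
      have hval : expWeight c l T T = 0 := by simp [expWeight]
      unfold ContinuousWithinAt
      rw [hval]
      refine Tendsto.mono_left ?_ (nhdsWithin_mono _ Icc_subset_Iic_self)
      have hsplit : Iic T = Iio T ∪ {T} := by
        ext x; simp [le_iff_lt_or_eq]
      rw [hsplit, nhdsWithin_union, tendsto_sup]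
      constructor
      · refine (tendsto_expW' c hc l hl T).congr' ?_
        filter_upwards [self_mem_nhdsWithin] with x hx
        simp [expWeight, mem_Iio.mp hx]
      · rw [nhdsWithin_singleton]
        simpa [hval] using tendsto_pure_nhds (expWeight c l T) T
  · intro a ha b hb hab
    by_cases hbT : b < T
    · have haT : a < T := lt_of_le_of_lt hab hbT
      simp only [expWeight, if_pos haT, if_pos hbT]
      apply Real.exp_le_exp.mpr
      rw [neg_div, neg_div, neg_le_neg_iff]
      have h1 : (0:ℝ) < T - b := by linarith
      have h2 : T - b ≤ T - a := by linarith
      gcongr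
    · simp only [expWeight, if_neg hbT]
      split_ifs
      exacts [le_of_lt (Real.exp_pos _), le_refl 0]
  · intro t ht
    simp only [expWeight, if_pos ht.2]
    exact Real.exp_pos _

open Filter Topology in
private lemma derivW' (c : ℝ) (l : ℕ) (hl : 1 ≤ l) (T t : ℝ) (ht : t < T) :
    deriv (expWeight c l T) t
      = Real.exp (-c / (T - t) ^ (2 * l)) * (-(2 * l * c) / (T - t) ^ (2 * l + 1)) := by
  have hs : 0 < T - t := sub_pos.mpr ht
  have hs0 : T - t ≠ 0 := ne_of_gt hs
  have h1 : HasDerivAt (fun x : ℝ => T - x) (-1) t := (hasDerivAt_id t).const_sub T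
  have h2 := h1.pow (2 * l)
  have hne : (T - t) ^ (2 * l) ≠ 0 := pow_ne_zero _ hs0
  have h3 := h2.inv hne
  have h4 := (h3.const_mul (-c)).exp
  have heq : expWeight c l T =ᶠ[𝓝 t] fun x => Real.exp (-c * ((T - x) ^ (2 * l))⁻¹) := by
    filter_upwards [Iio_mem_nhds ht] with x hx
    simp [expWeight, mem_Iio.mp hx, div_eq_mul_inv]
  have h5 := h4.congr_of_eventuallyEq heq
  rw [h5.deriv]
  simp only [Pi.inv_apply, Pi.pow_apply]
  have e1 : -c * ((T - t) ^ (2 * l))⁻¹ = -c / (T - t) ^ (2 * l) := by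
    rw [div_eq_mul_inv]
  rw [e1]
  congr 1
  have epow : (T - t) ^ (2 * l - 1) * (T - t) ^ (2 * l + 1) = ((T - t) ^ (2 * l)) ^ 2 := by
    rw [← pow_mul, ← pow_add]
    congr 1
    omega
  have h2ne : ((T - t) ^ (2 * l)) ^ 2 ≠ 0 := pow_ne_zero _ hne
  rw [mul_div_assoc', div_eq_div_iff h2ne (pow_ne_zero _ hs0)]
  push_cast
  linear_combination (-2 * (l : ℝ) * c) * epow

/-- **Compatibility of the exponential weights for the source-term method:** with
`K(τ) = C_K e^{C_K/τ^{2ℓ}}`, `q ∈ (1, 2^{1/(4ℓ)})`, `C₀ = C₁/q^{4ℓ} − C_K/(q−1)^{2ℓ} > C₁/2`,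
`C₁/2 < C⋆ < C₀ < C₁`, and `ρ₀(t) = C_K e^{−C₀/(T−t)^{2ℓ}}`, `ρ₁(t) = e^{−C₁/(T−t)^{2ℓ}}`,
`ρ(t) = e^{−C⋆/(T−t)^{2ℓ}}`, one has: (i) `ρ₀, ρ₁, ρ` are continuous, non increasing,
positive on `[0,T)` and vanish at `T`; (ii) `ρ₀(t) = ρ₁(q²(t−T)+T)·K((q−1)(T−t))` on
`[T(1−1/q²),T]`; (iii) `ρ₀ ≤ Cρ`, `ρ₁ ≤ Cρ`, `|ρ'|ρ₀ ≤ Cρ²` on `[0,T]`; (iv) `ρ² ≤ ρ₁`. -/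
theorem source_term_weights_compatibility
    (l : ℕ) (hl : 14 ≤ l) (T : ℝ) (hT : 0 < T)
    (CK : ℝ) (hCK : 0 < CK)
    (q : ℝ) (hq : q ∈ Set.Ioo 1 ((2:ℝ) ^ ((1:ℝ) / (4 * l))))
    (C1 : ℝ) (hC1 : 0 < C1)
    (C0 : ℝ) (hC0def : C0 = C1 / q ^ (4 * l) - CK / (q - 1) ^ (2 * l))
    (hC0 : C1 / 2 < C0)
    (Cstar : ℝ) (hCs1 : C1 / 2 < Cstar) (hCs2 : Cstar < C0) (hCs3 : C0 < C1) :
    -- (i)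
    (∀ c : ℝ, 0 < c →
        ContinuousOn (expWeight c l T) (Set.Icc 0 T) ∧
        AntitoneOn (expWeight c l T) (Set.Icc 0 T) ∧
        (∀ t ∈ Set.Ico 0 T, 0 < expWeight c l T t) ∧
        expWeight c l T T = 0) ∧
    -- (ii)
    (∀ t ∈ Set.Icc (T * (1 - 1 / q ^ 2)) T,
        CK * expWeight C0 l T t
          = expWeight C1 l T (q ^ 2 * (t - T) + T) * Kcost CK l ((q - 1) * (T - t))) ∧
    -- (iii)
    (∃ C : ℝ, 0 < C ∧ ∀ t ∈ Set.Icc 0 T,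
        CK * expWeight C0 l T t ≤ C * expWeight Cstar l T t ∧
        expWeight C1 l T t ≤ C * expWeight Cstar l T t ∧
        |deriv (expWeight Cstar l T) t| * (CK * expWeight C0 l T t)
          ≤ C * (expWeight Cstar l T t) ^ 2) ∧
    -- (iv)
    (∀ t ∈ Set.Icc 0 T, (expWeight Cstar l T t) ^ 2 ≤ expWeight C1 l T t) := by
  obtain ⟨hq1, hq2⟩ := hq
  have hq0 : 0 < q := lt_trans one_pos hq1
  have hCs0 : 0 < Cstar := by linarith
  have hl1 : 1 ≤ l := by omega
  refine ⟨fun c hc => partI' c hc l hl1 T, ?_, ?_, ?_⟩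
  -- (ii)
  · intro t ht
    rcases lt_or_eq_of_le ht.2 with h | h
    · have hs : 0 < T - t := sub_pos.mpr h
      have h2 : q ^ 2 * (t - T) + T < T := by nlinarith [mul_pos (pow_pos hq0 2) hs]
      have hs0 : T - t ≠ 0 := ne_of_gt hs
      have hqne : q ≠ 0 := ne_of_gt hq0
      have hq1' : q - 1 ≠ 0 := ne_of_gt (by linarith)
      simp only [expWeight, Kcost, if_pos h, if_pos h2]
      have key : -C0 / (T - t) ^ (2 * l)
          = -C1 / (T - (q ^ 2 * (t - T) + T)) ^ (2 * l) + CK / ((q - 1) * (T - t)) ^ (2 * l) := by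
        have e1 : T - (q ^ 2 * (t - T) + T) = q ^ 2 * (T - t) := by ring
        rw [e1, hC0def, mul_pow, mul_pow, ← pow_mul]
        have e2 : 2 * (2 * l) = 4 * l := by ring
        rw [e2]
        have p1 : (T - t) ^ (2 * l) ≠ 0 := pow_ne_zero _ hs0
        have p2 : q ^ (4 * l) ≠ 0 := pow_ne_zero _ hqne
        have p3 : (q - 1) ^ (2 * l) ≠ 0 := pow_ne_zero _ hq1'
        field_simp
        ring
      rw [key, Real.exp_add]
      ring
    · rw [← h]
      simp [expWeight, Kcost]
  -- (iii)
  · have hlR : (0:ℝ) < l := by exact_mod_cast Nat.pos_of_ne_zero (by omega)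
    set ε : ℝ := C0 - Cstar with hεdef
    have hε : 0 < ε := by simp only [hεdef]; linarith
    set C : ℝ := CK + 1 + 8 * l * Cstar * CK * T ^ (2 * l - 1) / ε ^ 2 with hCdef
    have hlast : 0 < 8 * l * Cstar * CK * T ^ (2 * l - 1) / ε ^ 2 := by positivity
    have hCpos : 0 < C := by simp only [hCdef]; linarith
    refine ⟨C, hCpos, fun t ht => ?_⟩
    rcases lt_or_eq_of_le ht.2 with h | h
    · have hs : 0 < T - t := sub_pos.mpr h
      have hsP : 0 < (T - t) ^ (2 * l) := pow_pos hs _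
      have hmono : ∀ c c' : ℝ, c ≤ c' →
          Real.exp (-c' / (T - t) ^ (2 * l)) ≤ Real.exp (-c / (T - t) ^ (2 * l)) := by
        intro c c' hcc
        apply Real.exp_le_exp.mpr
        rw [neg_div, neg_div, neg_le_neg_iff]
        exact (div_le_div_iff_of_pos_right hsP).mpr hcc
      have hderiv := derivW' Cstar l hl1 T t h
      simp only [expWeight, if_pos h]
      set A : ℝ := Real.exp (-Cstar / (T - t) ^ (2 * l)) with hAdef
      have hA : 0 < A := Real.exp_pos _
      refine ⟨?_, ?_, ?_⟩
      · exact mul_le_mul (by simp only [hCdef]; linarith) (hmono _ _ hCs2.le)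
          (Real.exp_pos _).le hCpos.le
      · exact (hmono _ _ (by linarith)).trans
          (le_mul_of_one_le_left hA.le (by simp only [hCdef]; linarith))
      · rw [hderiv]
        have habs : |A * (-(2 * l * Cstar) / (T - t) ^ (2 * l + 1))|
            = A * (2 * l * Cstar / (T - t) ^ (2 * l + 1)) := by
          rw [abs_mul, abs_of_pos hA, neg_div, abs_neg, abs_div,
            abs_of_nonneg (by positivity : (0:ℝ) ≤ 2 * l * Cstar),
            abs_of_pos (pow_pos hs _)]
        rw [habs]
        have hsplit : Real.exp (-C0 / (T - t) ^ (2 * l))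
            = A * Real.exp (-ε / (T - t) ^ (2 * l)) := by
          rw [hAdef, ← Real.exp_add]
          congr 1
          field_simp [hεdef]
          ring
        rw [hsplit]
        set E : ℝ := Real.exp (-ε / (T - t) ^ (2 * l)) with hEdef
        have hE : 0 < E := Real.exp_pos _
        have hx : 0 ≤ ε / (T - t) ^ (2 * l) := by positivity
        have hquad := exp_ge_sq_div_four' _ hx
        have hsq : (ε / (T - t) ^ (2 * l)) ^ 2 = ε ^ 2 / (T - t) ^ (4 * l) := by
          rw [div_pow, ← pow_mul]
          congr 2
          omega
        have hEbound : E ≤ 4 * (T - t) ^ (4 * l) / ε ^ 2 := by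
          have h1 : ε ^ 2 / (T - t) ^ (4 * l) / 4 ≤ Real.exp (ε / (T - t) ^ (2 * l)) := by
            rw [← hsq]; linarith [hquad]
          have h2 : E = (Real.exp (ε / (T - t) ^ (2 * l)))⁻¹ := by
            rw [hEdef, ← Real.exp_neg]; congr 1; ring
          rw [h2]
          rw [inv_le_comm₀ (Real.exp_pos _) (by positivity)]
          calc (4 * (T - t) ^ (4 * l) / ε ^ 2)⁻¹
              = ε ^ 2 / (T - t) ^ (4 * l) / 4 := by
                field_simp
            _ ≤ _ := h1
        have hpow4 : (T - t) ^ (4 * l) = (T - t) ^ (2 * l + 1) * (T - t) ^ (2 * l - 1) := by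
          rw [← pow_add]; congr 1; omega
        have hsT : (T - t) ^ (2 * l - 1) ≤ T ^ (2 * l - 1) :=
          pow_le_pow_left₀ hs.le (by linarith [ht.1]) _
        have hkey : 2 * l * Cstar / (T - t) ^ (2 * l + 1) * (CK * E) ≤ C := by
          have hstep : 2 * l * Cstar / (T - t) ^ (2 * l + 1) * (CK * E)
              ≤ 2 * l * Cstar / (T - t) ^ (2 * l + 1)
                * (CK * (4 * (T - t) ^ (4 * l) / ε ^ 2)) := by
            apply mul_le_mul_of_nonneg_left _ (by positivity)
            exact mul_le_mul_of_nonneg_left hEbound hCK.le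
          refine hstep.trans ?_
          have heq2 : 2 * l * Cstar / (T - t) ^ (2 * l + 1)
              * (CK * (4 * (T - t) ^ (4 * l) / ε ^ 2))
              = 8 * l * Cstar * CK * (T - t) ^ (2 * l - 1) / ε ^ 2 := by
            rw [hpow4]
            field_simp
            ring
          rw [heq2]
          have hfin : 8 * l * Cstar * CK * (T - t) ^ (2 * l - 1) / ε ^ 2
              ≤ 8 * l * Cstar * CK * T ^ (2 * l - 1) / ε ^ 2 := by
            gcongr
          simp only [hCdef]; linarith
        calc A * (2 * l * Cstar / (T - t) ^ (2 * l + 1)) * (CK * (A * E))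
            = (2 * l * Cstar / (T - t) ^ (2 * l + 1) * (CK * E)) * A ^ 2 := by ring
          _ ≤ C * A ^ 2 := mul_le_mul_of_nonneg_right hkey (sq_nonneg A)
    · rw [← h]
      simp [expWeight]
  -- (iv)
  · intro t ht
    rcases lt_or_eq_of_le ht.2 with h | h
    · have hs : 0 < T - t := sub_pos.mpr h
      have hsP : 0 < (T - t) ^ (2 * l) := pow_pos hs _
      simp only [expWeight, if_pos h]
      rw [sq, ← Real.exp_add]
      apply Real.exp_le_exp.mpr
      rw [← add_div]
      rw [show -Cstar + -Cstar = -(2 * Cstar) by ring, neg_div, neg_div]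
      exact neg_le_neg ((div_le_div_iff_of_pos_right hsP).mpr (by linarith))
    · rw [← h]
      simp [expWeight]

end
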